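/- Let Ω ⊂ ℝⁿ be open and bounded, ε > 0, and u ∈ C²(Ω) ∩ C⁰(closure Ω) with u continuous up to the boundary, u = -1 and ∂_ν u = 0 on ∂Ω (or u extended by -1 outside Ω in W²,²_loc). Suppose {u > 1} has finite perimeter in Ω. Then (1/ε)∫_{{u>1}} (ε Δu - (1/ε) W'(u))² dx ≥ ∫_{{u>1}} ε (Δu)² + (4/ε)|∇u|² + (1/ε³)(W'(u))² dx, where W(u) = (u²-1)²/4. -/

import Mathlib

/-!
With `W'(t) = t³ - t`, the cross term of the square is `-(2/ε) ∫_{u>1} W'(u) Δu`, so it suffices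
that `∫_{u>1} W''(u) |∇u|² + W'(u) Δu ≤ 0`, because `W''(u) = 3u² - 1 ≥ 2` there. This is
integration by parts against `g(u) ∇u` with `g = W' χ`, where `χ` is a `C¹` monotone cutoff
vanishing on `(-∞, 1]`: since `u = -1` off `Ω`, the set `{u ≥ 1}` is a compact subset of `Ω`, so
no boundary term appears, and the extra term `W'(u) χ'(u) |∇u|²` is nonnegative. Letting `χ`
increase to the indicator of `(1, ∞)` gives the claim by dominated convergence.
-/

open MeasureTheory

noncomputable def lap {n : ℕ} (u : EuclideanSpace ℝ (Fin n) → ℝ)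
    (x : EuclideanSpace ℝ (Fin n)) : ℝ :=
  ∑ i : Fin n,
    fderiv ℝ (fun y => fderiv ℝ u y (EuclideanSpace.single i (1 : ℝ))) x
      (EuclideanSpace.single i (1 : ℝ))

open Set Filter Bornology Topology

theorem EuclideanSpace.norm_sq_clm_eq_sum {ι : Type*} [Fintype ι] [DecidableEq ι]
    (l : EuclideanSpace ℝ ι →L[ℝ] ℝ) :
    ‖l‖ ^ 2 = ∑ i, l (EuclideanSpace.single i 1) ^ 2 := by
  set w := (InnerProductSpace.toDual ℝ (EuclideanSpace ℝ ι)).symm l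
  have hw : ∀ i, w i = l (EuclideanSpace.single i 1) := fun i => by
    rw [← InnerProductSpace.toDual_symm_apply, EuclideanSpace.inner_single_right]; simp [w]
  rw [← (InnerProductSpace.toDual ℝ _).symm.norm_map l, EuclideanSpace.real_norm_sq_eq]
  exact Finset.sum_congr rfl fun i _ => by rw [← hw]

theorem deriv_eq_zero_of_forall_le_eq_zero {g : ℝ → ℝ} {a t : ℝ} (hg : DifferentiableAt ℝ g t)
    (h0 : ∀ s ≤ a, g s = 0) (ht : t ≤ a) : deriv g t = 0 := by
  rw [← hg.derivWithin (uniqueDiffOn_Iic a t ht),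
    derivWithin_congr (s := Iic a) (f := 0) (fun s hs => h0 s hs) (h0 t ht)]
  simp

section Superlevel

theorem setOf_le_subset_of_lt {E : Type*} {Ω : Set E} {u : E → ℝ} {c : ℝ}
    (hout : ∀ x ∉ Ω, u x < c) : {x | c ≤ u x} ⊆ Ω :=
  fun x hx => by_contra fun hxΩ => (hout x hxΩ).not_ge hx

variable {E : Type*} [MetricSpace E] [ProperSpace E] {Ω : Set E} {u : E → ℝ} {c : ℝ}

theorem isCompact_setOf_le (hΩb : IsBounded Ω) (hu : Continuous u) (hout : ∀ x ∉ Ω, u x < c) :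
    IsCompact {x | c ≤ u x} :=
  Metric.isCompact_of_isClosed_isBounded (isClosed_le continuous_const hu)
    (hΩb.subset (setOf_le_subset_of_lt hout))

variable [MeasurableSpace E] [OpensMeasurableSpace E] {μ : Measure E}
  [IsFiniteMeasureOnCompacts μ] {F : Type*} [NormedAddCommGroup F] {f : E → F}

theorem integrableOn_setOf_lt (hΩb : IsBounded Ω) (hu : Continuous u) (hout : ∀ x ∉ Ω, u x < c)
    (hf : ContinuousOn f Ω) : IntegrableOn f {x | c < u x} μ :=
  ((hf.mono (setOf_le_subset_of_lt hout)).integrableOn_compact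
    (isCompact_setOf_le hΩb hu hout)).mono_set fun _ hx => le_of_lt (α := ℝ) hx

theorem integrable_of_eq_zero_of_lt (hΩb : IsBounded Ω) (hu : Continuous u)
    (hout : ∀ x ∉ Ω, u x < c) (hf : ContinuousOn f Ω) (hf0 : ∀ x, u x < c → f x = 0) :
    Integrable f μ :=
  ((hf.mono (setOf_le_subset_of_lt hout)).integrableOn_compact
    (isCompact_setOf_le hΩb hu hout)).integrable_of_forall_notMem_eq_zero
    fun x hx => hf0 x (not_le.1 hx)

end Superlevel

section Calculus

variable {E : Type*} [NormedAddCommGroup E] [NormedSpace ℝ E] {Ω : Set E} {u : E → ℝ} {c : ℝ}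

theorem hasFDerivAt_comp_of_forall_le_eq_zero {g : ℝ → ℝ} (hΩ : IsOpen Ω) (hu : Continuous u)
    (hu_diff : DifferentiableOn ℝ u Ω) (hout : ∀ x ∉ Ω, u x < c) (hg : Differentiable ℝ g)
    (hg0 : ∀ t ≤ c, g t = 0) (x : E) :
    HasFDerivAt (fun y => g (u y)) (deriv g (u x) • fderiv ℝ u x) x := by
  by_cases hx : x ∈ Ω
  · exact (hg (u x)).hasDerivAt.comp_hasFDerivAt x
      ((hu_diff x hx).differentiableAt (hΩ.mem_nhds hx)).hasFDerivAt
  · have hlt : ∀ᶠ y in 𝓝 x, u y < c := hu.continuousAt.eventually_lt continuousAt_const (hout x hx)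
    rw [deriv_eq_zero_of_forall_le_eq_zero (hg _) hg0 (hout x hx).le, zero_smul]
    exact (hasFDerivAt_const 0 x).congr_of_eventuallyEq
      (hlt.mono fun y hy => hg0 _ hy.le)

theorem contDiffOn_fderiv_apply (hΩ : IsOpen Ω) (hu : ContDiffOn ℝ 2 u Ω) (v : E) :
    ContDiffOn ℝ 1 (fun y => fderiv ℝ u y v) Ω :=
  (hu.fderiv_of_isOpen hΩ (by norm_num)).clm_apply contDiffOn_const

theorem continuousOn_fderiv_fderiv_apply (hΩ : IsOpen Ω) (hu : ContDiffOn ℝ 2 u Ω) (v w : E) :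
    ContinuousOn (fun x => fderiv ℝ (fun y => fderiv ℝ u y v) x w) Ω :=
  ((contDiffOn_fderiv_apply hΩ hu v).continuousOn_fderiv_of_isOpen hΩ le_rfl).clm_apply
    continuousOn_const

end Calculus

section Laplacian

variable {n : ℕ} {Ω : Set (EuclideanSpace ℝ (Fin n))} {u : EuclideanSpace ℝ (Fin n) → ℝ} {c : ℝ}
  {g w : ℝ → ℝ}

theorem continuousOn_lap (hΩ : IsOpen Ω) (hu : ContDiffOn ℝ 2 u Ω) : ContinuousOn (lap u) Ω :=
  continuousOn_finsetSum _ fun _ _ => continuousOn_fderiv_fderiv_apply hΩ hu _ _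

theorem continuousOn_deriv_comp_mul_sq_norm_add_comp_mul_lap (hΩ : IsOpen Ω) (hu : Continuous u)
    (hu_sm : ContDiffOn ℝ 2 u Ω) (hg : ContDiff ℝ 1 g) :
    ContinuousOn (fun x => deriv g (u x) * ‖fderiv ℝ u x‖ ^ 2 + g (u x) * lap u x) Ω :=
  (((hg.continuous_deriv le_rfl).comp hu).continuousOn.mul
    ((hu_sm.continuousOn_fderiv_of_isOpen hΩ (by norm_num)).norm.pow 2)).add
    ((hg.continuous.comp hu).continuousOn.mul (continuousOn_lap hΩ hu_sm))

theorem integral_deriv_comp_mul_sq_add_comp_mul_fderiv_fderiv_apply (hΩ : IsOpen Ω)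
    (hΩb : IsBounded Ω) (hu : Continuous u) (hu_sm : ContDiffOn ℝ 2 u Ω)
    (hout : ∀ x ∉ Ω, u x < c) (hg : ContDiff ℝ 1 g) (hg0 : ∀ t ≤ c, g t = 0)
    (v : EuclideanSpace ℝ (Fin n)) :
    ∫ x, (deriv g (u x) * fderiv ℝ u x v ^ 2
      + g (u x) * fderiv ℝ (fun y => fderiv ℝ u y v) x v) = 0 := by
  have hg_diff : Differentiable ℝ g := hg.differentiable one_ne_zero
  have hG := hasFDerivAt_comp_of_forall_le_eq_zero hΩ hu (hu_sm.differentiableOn (by norm_num)) hout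
    hg_diff hg0
  have hφ := contDiffOn_fderiv_apply hΩ hu_sm v
  have hgu : Continuous fun x => g (u x) := hg.continuous.comp hu
  have hint : ∀ f : EuclideanSpace ℝ (Fin n) → ℝ, ContinuousOn f Ω → (∀ x, u x < c → f x = 0) →
      Integrable f := fun f hf hf0 => integrable_of_eq_zero_of_lt hΩb hu hout hf hf0
  have hA : Integrable fun x => deriv g (u x) * fderiv ℝ u x v ^ 2 :=
    hint _ (((hg.continuous_deriv le_rfl).comp hu).continuousOn.mul (hφ.continuousOn.pow 2))
      fun x hx => by simp [deriv_eq_zero_of_forall_le_eq_zero (hg_diff _) hg0 hx.le]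
  have hB : Integrable fun x => g (u x) * fderiv ℝ (fun y => fderiv ℝ u y v) x v :=
    hint _ (hgu.continuousOn.mul (continuousOn_fderiv_fderiv_apply hΩ hu_sm v v))
      fun x hx => by simp [hg0 _ hx.le]
  have hDG : ∀ x, fderiv ℝ (fun y => g (u y)) x v * fderiv ℝ u x v
      = deriv g (u x) * fderiv ℝ u x v ^ 2 := fun x => by
    rw [(hG x).fderiv]; simp only [FunLike.coe_smul, Pi.smul_apply, smul_eq_mul]; ring
  have hsupp : tsupport (fun y => g (u y)) ⊆ Ω :=
    (closure_minimal (fun y (hy : g (u y) ≠ 0) => show c ≤ u y from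
      not_lt.1 fun h => hy (hg0 _ h.le)) (isClosed_le continuous_const hu)).trans
      (setOf_le_subset_of_lt hout)
  have hibp := integral_mul_fderiv_eq_neg_fderiv_mul_of_integrable (v := v)
    (by simpa only [hDG] using hA) hB
    (hint _ (hgu.continuousOn.mul hφ.continuousOn) fun x hx => by simp [hg0 _ hx.le])
    (fun x _ => (hG x).differentiableAt)
    fun x hx => (hφ.differentiableOn one_ne_zero x (hsupp hx)).differentiableAt
      (hΩ.mem_nhds (hsupp hx))
  simp only [hDG] at hibp
  rw [integral_add hA hB, hibp, add_neg_cancel]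

theorem setIntegral_deriv_comp_mul_sq_norm_add_comp_mul_lap (hΩ : IsOpen Ω) (hΩb : IsBounded Ω)
    (hu : Continuous u) (hu_sm : ContDiffOn ℝ 2 u Ω) (hout : ∀ x ∉ Ω, u x < c)
    (hg : ContDiff ℝ 1 g) (hg0 : ∀ t ≤ c, g t = 0) :
    ∫ x in {x | c < u x}, (deriv g (u x) * ‖fderiv ℝ u x‖ ^ 2 + g (u x) * lap u x) = 0 := by
  have hg'0 : ∀ t ≤ c, deriv g t = 0 := fun t ht =>
    deriv_eq_zero_of_forall_le_eq_zero (hg.differentiable one_ne_zero t) hg0 ht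
  rw [setIntegral_eq_integral_of_forall_compl_eq_zero fun x hx => by
    simp [hg0 _ (not_lt.1 hx), hg'0 _ (not_lt.1 hx)]]
  simp_rw [lap, EuclideanSpace.norm_sq_clm_eq_sum, Finset.mul_sum, ← Finset.sum_add_distrib]
  rw [integral_finsetSum]
  · exact Finset.sum_eq_zero fun i _ =>
      integral_deriv_comp_mul_sq_add_comp_mul_fderiv_fderiv_apply hΩ hΩb hu hu_sm hout hg hg0 _
  · refine fun i _ => integrable_of_eq_zero_of_lt hΩb hu hout ?_ fun x hx => by
      simp [hg0 _ hx.le, hg'0 _ hx.le]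
    exact (((hg.continuous_deriv le_rfl).comp hu).continuousOn.mul
      ((contDiffOn_fderiv_apply hΩ hu_sm _).continuousOn.pow 2)).add
      ((hg.continuous.comp hu).continuousOn.mul (continuousOn_fderiv_fderiv_apply hΩ hu_sm _ _))

theorem setIntegral_cutoff_mul_le_zero (hΩ : IsOpen Ω) (hΩb : IsBounded Ω)
    (hu : Continuous u) (hu_sm : ContDiffOn ℝ 2 u Ω) (hout : ∀ x ∉ Ω, u x < c)
    (hw : ContDiff ℝ 1 w) (hw_nonneg : ∀ t, c < t → 0 ≤ w t) {χ : ℝ → ℝ} (hχ : ContDiff ℝ 1 χ)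
    (hχ_mono : Monotone χ) (hχ0 : ∀ t ≤ c, χ t = 0) :
    ∫ x in {x | c < u x}, χ (u x) * (deriv w (u x) * ‖fderiv ℝ u x‖ ^ 2 + w (u x) * lap u x)
      ≤ 0 := by
  set wχ := fun t => w t * χ t
  have hwχ : ContDiff ℝ 1 wχ := hw.mul hχ
  have hderiv : ∀ t, deriv wχ t = deriv w t * χ t + w t * deriv χ t := fun t =>
    deriv_mul (hw.differentiable one_ne_zero t) (hχ.differentiable one_ne_zero t)
  rw [← setIntegral_deriv_comp_mul_sq_norm_add_comp_mul_lap hΩ hΩb hu hu_sm hout hwχ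
    fun t ht => by simp [wχ, hχ0 t ht]]
  refine setIntegral_mono_on ?_ ?_ (measurableSet_lt continuous_const.measurable hu.measurable)
    fun x hx => ?_
  · exact integrableOn_setOf_lt hΩb hu hout <| ((hχ.continuous.comp hu).continuousOn).mul
      (continuousOn_deriv_comp_mul_sq_norm_add_comp_mul_lap hΩ hu hu_sm hw)
  · exact integrableOn_setOf_lt hΩb hu hout
      (continuousOn_deriv_comp_mul_sq_norm_add_comp_mul_lap hΩ hu hu_sm hwχ)
  · have hχ' : 0 ≤ deriv χ (u x) := hχ_mono.deriv_nonneg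
    have hwx := hw_nonneg _ hx
    rw [hderiv]
    nlinarith [mul_nonneg (mul_nonneg hwx hχ') (sq_nonneg ‖fderiv ℝ u x‖)]

theorem setIntegral_deriv_comp_mul_sq_norm_add_comp_mul_lap_nonpos (hΩ : IsOpen Ω)
    (hΩb : IsBounded Ω) (hu : Continuous u) (hu_sm : ContDiffOn ℝ 2 u Ω)
    (hout : ∀ x ∉ Ω, u x < c) (hw : ContDiff ℝ 1 w) (hw_nonneg : ∀ t, c < t → 0 ≤ w t) :
    ∫ x in {x | c < u x}, (deriv w (u x) * ‖fderiv ℝ u x‖ ^ 2 + w (u x) * lap u x) ≤ 0 := by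
  set H := fun x => deriv w (u x) * ‖fderiv ℝ u x‖ ^ 2 + w (u x) * lap u x
  set χ : ℕ → ℝ → ℝ := fun k t => Real.smoothTransition (k * (t - c))
  have hS : MeasurableSet {x | c < u x} := measurableSet_lt measurable_const hu.measurable
  have hH : IntegrableOn H {x | c < u x} := integrableOn_setOf_lt hΩb hu hout
    (continuousOn_deriv_comp_mul_sq_norm_add_comp_mul_lap hΩ hu hu_sm hw)
  have hle : ∀ k : ℕ, ∫ x in {x | c < u x}, χ k (u x) * H x ≤ 0 := fun k =>
    setIntegral_cutoff_mul_le_zero hΩ hΩb hu hu_sm hout hw hw_nonneg (by fun_prop)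
      (fun a b hab => Real.smoothTransition.monotone <|
        mul_le_mul_of_nonneg_left (sub_le_sub_right hab c) k.cast_nonneg)
      fun t ht => Real.smoothTransition.zero_of_nonpos <|
        mul_nonpos_of_nonneg_of_nonpos k.cast_nonneg (sub_nonpos.2 ht)
  refine le_of_tendsto' (tendsto_integral_of_dominated_convergence (fun x => ‖H x‖)
    (fun k => ?_) hH.norm (fun k => ?_) ?_) hle
  · exact ((Real.smoothTransition.continuous.comp (by fun_prop)).aestronglyMeasurable).mul
      hH.aestronglyMeasurable
  · refine Eventually.of_forall fun x => ?_
    rw [norm_mul, Real.norm_of_nonneg (Real.smoothTransition.nonneg _)]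
    exact mul_le_of_le_one_left (norm_nonneg _) (Real.smoothTransition.le_one _)
  · refine (ae_restrict_iff' hS).2 (Eventually.of_forall fun x (hx : c < u x) => ?_)
    refine tendsto_const_nhds.congr' ?_
    filter_upwards [tendsto_natCast_atTop_atTop.eventually_ge_atTop (1 / (u x - c))] with k hk
    have hχ1 : χ k (u x) = 1 :=
      Real.smoothTransition.one_of_one_le ((div_le_iff₀ (sub_pos.2 hx)).1 hk)
    rw [eq_comm, hχ1, one_mul]

end Laplacian

theorem diffuse_energy_exterior_estimate_general {n : ℕ}
    (Ω : Set (EuclideanSpace ℝ (Fin n))) (hΩ : IsOpen Ω)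
    (hΩb : Bornology.IsBounded Ω) (ε : ℝ) (hε : 0 < ε)
    (u : EuclideanSpace ℝ (Fin n) → ℝ)
    (hu_cont : Continuous u) (hu_sm : ContDiffOn ℝ 2 u Ω)
    (hu_out : ∀ x ∉ Ω, u x = -1) :
    (∫ x in {x | 1 < u x},
        ε * (lap u x) ^ 2 + (4 / ε) * ‖fderiv ℝ u x‖ ^ 2
          + (1 / ε ^ 3) * ((u x) ^ 3 - u x) ^ 2)
      ≤ (1 / ε) * ∫ x in {x | 1 < u x},
          (ε * lap u x - (1 / ε) * ((u x) ^ 3 - u x)) ^ 2 := by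
  have hout : ∀ x ∉ Ω, u x < 1 := fun x hx => by rw [hu_out x hx]; norm_num
  have hW' : ∀ t : ℝ, deriv (fun t => t ^ 3 - t) t = 3 * t ^ 2 - 1 := fun t =>
    ((hasDerivAt_pow 3 t).sub (hasDerivAt_id t)).deriv.trans (by norm_num)
  have hibp := setIntegral_deriv_comp_mul_sq_norm_add_comp_mul_lap_nonpos hΩ hΩb hu_cont hu_sm
    hout (w := fun t => t ^ 3 - t) (by fun_prop) fun t ht => by
      nlinarith [mul_pos (mul_pos (zero_lt_one.trans ht) (sub_pos.2 ht)) (by linarith : 0 < t + 1)]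
  simp only [hW'] at hibp
  have hDu := hu_sm.continuousOn_fderiv_of_isOpen hΩ (by norm_num)
  have hΔu := continuousOn_lap hΩ hu_sm
  have hint : ∀ f : EuclideanSpace ℝ (Fin n) → ℝ, ContinuousOn f Ω →
      IntegrableOn f {x | 1 < u x} := fun f hf => integrableOn_setOf_lt hΩb hu_cont hout hf
  have hcross : ∫ x in {x | 1 < u x}, ((u x ^ 3 - u x) * lap u x + 2 * ‖fderiv ℝ u x‖ ^ 2) ≤ 0 :=
    (setIntegral_mono_on (hint _ (by fun_prop)) (hint _ (by fun_prop))
      (measurableSet_lt measurable_const hu_cont.measurable) fun x (hx : 1 < u x) => by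
        nlinarith [mul_nonneg (by nlinarith : (0 : ℝ) ≤ 3 * u x ^ 2 - 3)
          (sq_nonneg ‖fderiv ℝ u x‖)]).trans hibp
  have hsplit : ∀ x, (1 / ε) * (ε * lap u x - (1 / ε) * (u x ^ 3 - u x)) ^ 2
      = ε * lap u x ^ 2 + (4 / ε) * ‖fderiv ℝ u x‖ ^ 2 + (1 / ε ^ 3) * (u x ^ 3 - u x) ^ 2
        - (2 / ε) * ((u x ^ 3 - u x) * lap u x + 2 * ‖fderiv ℝ u x‖ ^ 2) := fun x => by
    field_simp; ring
  rw [← integral_const_mul, funext hsplit, integral_sub (hint _ (by fun_prop))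
    ((hint _ (by fun_prop)).const_mul _), integral_const_mul]
  nlinarith [div_pos two_pos hε]

/-- For `u ∈ C²(Ω) ∩ C⁰` extended by `-1` outside the open bounded set `Ω`,
if `{u > 1}` has finite perimeter (its boundary has finite `H^{n-1}`-measure),
then with `W(u) = (u²-1)²/4` (so `W'(u) = u³ - u`):
`(1/ε)∫_{{u>1}} (εΔu − (1/ε)W'(u))² ≥ ∫_{{u>1}} ε(Δu)² + (4/ε)|∇u|² + (1/ε³)W'(u)²`. -/
theorem diffuse_energy_exterior_estimate {n : ℕ}
    (Ω : Set (EuclideanSpace ℝ (Fin n))) (hΩ : IsOpen Ω)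
    (hΩb : Bornology.IsBounded Ω) (ε : ℝ) (hε : 0 < ε)
    (u : EuclideanSpace ℝ (Fin n) → ℝ)
    (hu_cont : Continuous u) (hu_sm : ContDiffOn ℝ 2 u Ω)
    (hu_out : ∀ x ∉ Ω, u x = -1)
    (hperim : μH[(n : ℝ) - 1] (frontier {x | 1 < u x}) < ⊤) :
    (∫ x in {x | 1 < u x},
        ε * (lap u x) ^ 2 + (4 / ε) * ‖fderiv ℝ u x‖ ^ 2
          + (1 / ε ^ 3) * ((u x) ^ 3 - u x) ^ 2)
      ≤ (1 / ε) * ∫ x in {x | 1 < u x},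
          (ε * lap u x - (1 / ε) * ((u x) ^ 3 - u x)) ^ 2 :=
  diffuse_energy_exterior_estimate_general Ω hΩ hΩb ε hε u hu_cont hu_sm hu_out
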